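/- Let f : [0,1] → [0,1] be a C¹ diffeomorphism fixing 0 and 1, with f' > 0 and with f' α-Hölder for some α ∈ (0,1). For n ≥ 1 let a_n = max_{x∈[0,1]} log((fⁿ)'(x)) and a₀ = 0. Then there exist constants K, K₁ > 0 such that 2a_n − a_{n−1} − a_{n+1} ≤ K·exp(−a_n + K₁·n^{1−α}) for all n ≥ 1, provided the set {x : f(x) = x, f'(x) ≠ 1} is empty. -/

import Mathlib

/-!
Let `x₂` realise `a n` and `f x₁ = x₂`. Then `a (n + 1) ≥ a n + log f' x₁` and
`a (n - 1) ≥ a n - log f' x₂`, so the second difference `2 a n - a (n - 1) - a (n + 1)` is at most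
`C |x₂ - x₁| ^ α`. The images of the fundamental interval between `x₁` and `x₂` under
`f, …, fⁿ⁻¹` are consecutive, so by Hölder's inequality the distortion of `fⁿ` on it is at most
`C n ^ (1 - α)`; as `fⁿ` maps it into `[0, 1]`, `|x₂ - x₁| ≤ exp (C n ^ (1 - α) - a n)`.

Since every fixed point is parabolic, an orbit visits the region where `log f' ≥ ε` only boundedly
often, so `a n = o(n)`. A sublinear sequence that is convex up to these defects grows at most like
`D n ^ (1 - α)` (the defects are summable above that curve), and this growth bound turns
`exp (-α a n)` into `exp (-a n)`.
-/

open Real Set Filter Finset Function Topology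

theorem rpow_add_le_add_mul_rpow_sub_one {x h β : ℝ} (hx : 0 < x) (hxh : -x ≤ h)
    (hβ0 : 0 ≤ β) (hβ1 : β ≤ 1) : (x + h) ^ β ≤ x ^ β + β * x ^ (β - 1) * h := by
  have hs : -1 ≤ h / x := by rwa [le_div_iff₀ hx, neg_one_mul]
  calc (x + h) ^ β = x ^ β * (1 + h / x) ^ β := by
        rw [← mul_rpow hx.le (by linarith), mul_add, mul_one, mul_div_cancel₀ _ hx.ne']
    _ ≤ x ^ β * (1 + β * (h / x)) := by gcongr; exact rpow_one_add_le_one_add_mul_self hs hβ0 hβ1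
    _ = x ^ β + β * x ^ (β - 1) * h := by
        rw [rpow_sub_one hx.ne']; field_simp

theorem rpow_succ_sub_rpow_le {β n i : ℝ} (hβ0 : 0 ≤ β) (hβ1 : β ≤ 1) (hn : 1 ≤ n) (hi : n ≤ i) :
    (i + 1) ^ β - i ^ β ≤ n ^ β - (n - 1) ^ β := by
  have h₁ := rpow_add_le_add_mul_rpow_sub_one (h := 1) (by linarith : 0 < i) (by linarith) hβ0 hβ1
  have h₂ := rpow_add_le_add_mul_rpow_sub_one (h := -1) (by linarith : 0 < n) (by linarith) hβ0 hβ1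
  have h₃ : i ^ (β - 1) ≤ n ^ (β - 1) := rpow_le_rpow_of_nonpos (by linarith) hi (by linarith)
  rw [← sub_eq_add_neg] at h₂
  nlinarith

theorem div_le_rpow_sub_rpow_sub_one {β n : ℝ} (hβ0 : 0 ≤ β) (hβ1 : β ≤ 1) (hn : 1 ≤ n) :
    β / n ≤ n ^ β - (n - 1) ^ β := by
  have h₂ := rpow_add_le_add_mul_rpow_sub_one (h := -1) (by linarith : 0 < n) (by linarith) hβ0 hβ1
  have h₃ : n ^ (-1 : ℝ) ≤ n ^ (β - 1) := rpow_le_rpow_of_exponent_le hn (by linarith)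
  rw [← sub_eq_add_neg] at h₂
  rw [rpow_neg_one] at h₃
  rw [div_eq_mul_inv]
  nlinarith

theorem summable_rpow_mul_exp_neg_mul_rpow {α β : ℝ} (p : ℝ) (hα : 0 < α) (hβ : 0 < β) :
    Summable fun k : ℕ => (k : ℝ) ^ p * exp (-α * (k : ℝ) ^ β) := by
  have hlim : Tendsto (fun k : ℕ => ((k : ℝ) ^ β) ^ ((p + 2) / β) * exp (-α * (k : ℝ) ^ β))
      atTop (𝓝 0) :=
    (tendsto_rpow_mul_exp_neg_mul_atTop_nhds_zero _ _ hα).comp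
      ((tendsto_rpow_atTop hβ).comp tendsto_natCast_atTop_atTop)
  refine summable_of_isBigO_nat' (summable_one_div_nat_pow.2 one_lt_two) ?_
  refine ((hlim.isBigO_one ℝ).mul (Asymptotics.isBigO_refl (fun k : ℕ => 1 / (k : ℝ) ^ 2) _)).congr'
    ?_ (by simp)
  filter_upwards [eventually_gt_atTop 0] with k hk
  have hk' : (0 : ℝ) < k := by exact_mod_cast hk
  rw [← rpow_mul hk'.le, mul_div_cancel₀ _ hβ.ne', rpow_add hk', rpow_two]
  field_simp

theorem tendsto_mul_tsum_nat_add {g : ℕ → ℝ} (hg0 : ∀ k, 0 ≤ g k) (hg : Summable g)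
    (hkg : Summable fun k : ℕ => (k : ℝ) * g k) :
    Tendsto (fun n : ℕ => (n : ℝ) * ∑' i, g (i + n)) atTop (𝓝 0) := by
  refine squeeze_zero (fun n => mul_nonneg n.cast_nonneg (tsum_nonneg fun i => hg0 _))
    (fun n => ?_) (tendsto_sum_nat_add fun k : ℕ => (k : ℝ) * g k)
  rw [← tsum_mul_left]
  refine Summable.tsum_le_tsum (fun i => ?_) (((summable_nat_add_iff n).2 hg).mul_left _)
    ((summable_nat_add_iff n).2 hkg)
  gcongr
  · exact hg0 _
  · linarith [i.cast_nonneg (α := ℝ)]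

theorem exists_lt_sub_of_sublinear {a : ℕ → ℝ} (hsub : ∀ ε > 0, ∃ C, ∀ n, a n ≤ ε * n + C)
    {κ : ℝ} (hκ : 0 < κ) (n : ℕ) : ∃ k ≥ n, a (k + 1) - a k < κ := by
  by_contra! h
  have hlin : ∀ t : ℕ, a n + t * κ ≤ a (n + t) := by
    intro t
    induction t with
    | zero => simp
    | succ t ih => rw [← add_assoc]; push_cast; linarith [h (n + t) (by omega)]
  obtain ⟨C, hC⟩ := hsub (κ / 2) (by positivity)
  obtain ⟨t, ht⟩ := exists_nat_gt ((C - a n + κ / 2 * n) / (κ / 2))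
  rw [div_lt_iff₀ (by positivity)] at ht
  have := hC (n + t)
  have := hlin t
  push_cast at *
  nlinarith

theorem le_sub_of_almostConvex {a b g : ℕ → ℝ} (hg0 : ∀ k, 0 ≤ g k) (hg : Summable g)
    {n : ℕ} (hconv : ∀ k ≥ n, b k ≤ a k → 2 * a k - a (k - 1) - a (k + 1) ≤ g k)
    {κ : ℝ} (hb : ∀ k ≥ n, b (k + 1) - b k ≤ κ) (hstart : b n ≤ a n)
    (hslope : κ + ∑' i, g (i + n) ≤ a n - a (n - 1)) :
    ∀ k ≥ n, κ ≤ a (k + 1) - a k := by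
  set τ := fun k => ∑' i, g (i + k)
  have hτ0 : ∀ k, 0 ≤ τ k := fun k => tsum_nonneg fun i => hg0 _
  have hτ : ∀ k, τ k = g k + τ (k + 1) := fun k => by
    simp only [τ, ((summable_nat_add_iff k).2 hg).tsum_eq_zero_add, zero_add, add_right_comm _ 1 k,
      add_assoc]
  -- the slope corrected by the tail of the defects, `a (k + 1) - a k - τ (k + 1)`, never decreases
  have key : ∀ k ≥ n, b k ≤ a k ∧ a n - a (n - 1) - τ n ≤ a (k + 1) - a k - τ (k + 1) := by
    intro k hk
    induction k, hk using Nat.le_induction with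
    | base => exact ⟨hstart, by linarith [hconv n le_rfl hstart, hτ n]⟩
    | succ k hk ih =>
      have hk' : b (k + 1) ≤ a (k + 1) := by linarith [hb k hk, hτ0 (k + 1), ih.1, ih.2]
      refine ⟨hk', ?_⟩
      have := hconv (k + 1) (by omega) hk'
      simp only [Nat.add_sub_cancel] at this
      linarith [hτ (k + 1), ih.2]
  intro k hk
  linarith [(key k hk).2, hτ0 (k + 1), hτ0 n]

/-- At the first index where `a n - 2 D n ^ β` is large, the slope of `a` is at least twice the
increment of `D n ^ β`; this beats all later increments of `D n ^ β` plus the tail of the defects,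
so `a` would grow linearly. -/
theorem exists_le_two_mul_rpow_add {a g : ℕ → ℝ} {β D : ℝ} (hβ0 : 0 < β) (hβ1 : β ≤ 1)
    (hD : 0 < D) (hg0 : ∀ k, 0 ≤ g k) (hg : Summable g) (hkg : Summable fun k : ℕ => (k : ℝ) * g k)
    (hdefect : ∀ k : ℕ, 1 ≤ k → D * (k : ℝ) ^ β ≤ a k → 2 * a k - a (k - 1) - a (k + 1) ≤ g k)
    (hsub : ∀ ε > 0, ∃ C, ∀ n, a n ≤ ε * n + C) :
    ∃ C, ∀ n : ℕ, a n ≤ 2 * D * (n : ℝ) ^ β + C := by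
  classical
  obtain ⟨N, hN⟩ := eventually_atTop.1 ((tendsto_mul_tsum_nat_add hg0 hg hkg).eventually
    (eventually_le_nhds (by positivity : 0 < D * β)))
  obtain ⟨M, hM⟩ := ((Set.finite_Iic N).image fun k => a k - 2 * D * (k : ℝ) ^ β).bddAbove
  refine ⟨max M 0, ?_⟩
  by_contra! hbad
  set n := Nat.find hbad
  have hn : 2 * D * (n : ℝ) ^ β + max M 0 < a n := Nat.find_spec hbad
  have hNn : N < n := by
    by_contra! h
    linarith [le_max_left M 0, hM ⟨n, h, rfl⟩]
  have hn1 : 1 ≤ n := by omega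
  have hprev := not_lt.1 (Nat.find_min hbad (Nat.sub_lt hn1 one_pos))
  rw [Nat.cast_sub hn1, Nat.cast_one] at hprev
  have hn1' : (1 : ℝ) ≤ n := by exact_mod_cast hn1
  set κ := D * ((n : ℝ) ^ β - ((n : ℝ) - 1) ^ β)
  have hκ : D * β / n ≤ κ := by
    rw [mul_div_assoc]
    exact mul_le_mul_of_nonneg_left (div_le_rpow_sub_rpow_sub_one hβ0.le hβ1 hn1') hD.le
  have htail : (n : ℝ) * ∑' i, g (i + n) ≤ D * β := hN n hNn.le
  rw [← le_div_iff₀' (by positivity)] at htail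
  obtain ⟨k, hk, hlt⟩ := exists_lt_sub_of_sublinear hsub (lt_of_lt_of_le (by positivity) hκ) n
  refine hlt.not_ge (le_sub_of_almostConvex hg0 hg (b := fun k => D * (k : ℝ) ^ β)
    (fun k hk => hdefect k (hn1.trans hk)) (fun k hk => ?_) ?_ ?_ k hk)
  · push_cast
    rw [← mul_sub]
    exact mul_le_mul_of_nonneg_left (rpow_succ_sub_rpow_le hβ0.le hβ1 hn1' (by exact_mod_cast hk))
      hD.le
  · have : 0 ≤ (n : ℝ) ^ β := by positivity
    nlinarith [le_max_right M 0]
  · nlinarith [le_max_right M 0]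

theorem exists_le_mul_rpow_add_of_almostConvex {α β c : ℝ} {a : ℕ → ℝ} (hα : 0 < α) (hβ0 : 0 < β)
    (hβ1 : β ≤ 1) (hc : 0 ≤ c)
    (hconv : ∀ k ≥ 1, 2 * a k - a (k - 1) - a (k + 1) ≤ c * exp (α * (c * (k : ℝ) ^ β - a k)))
    (hsub : ∀ ε > 0, ∃ C, ∀ n, a n ≤ ε * n + C) :
    ∃ D > 0, ∃ C, ∀ n : ℕ, a n ≤ D * (n : ℝ) ^ β + C := by
  set g : ℕ → ℝ := fun k => c * exp (-α * (k : ℝ) ^ β)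
  have hg : Summable g := by
    simpa [g] using (summable_rpow_mul_exp_neg_mul_rpow 0 hα hβ0).mul_left c
  have hkg : Summable fun k : ℕ => (k : ℝ) * g k := by
    simpa [g, mul_left_comm] using (summable_rpow_mul_exp_neg_mul_rpow 1 hα hβ0).mul_left c
  refine ⟨2 * (c + 1), by positivity, exists_le_two_mul_rpow_add hβ0 hβ1 (by positivity)
    (fun k => by positivity) hg hkg (fun k hk hak => ?_) hsub⟩
  refine (hconv k hk).trans (mul_le_mul_of_nonneg_left (exp_le_exp.2 ?_) hc)
  nlinarith

theorem exists_mem_uIcc_sub_eq_deriv_mul {g : ℝ → ℝ} {a b : ℝ}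
    (hg : ∀ x ∈ uIcc a b, DifferentiableAt ℝ g x) :
    ∃ y ∈ uIcc a b, g b - g a = deriv g y * (b - a) := by
  wlog hab : a < b generalizing a b
  · rcases (not_lt.1 hab).eq_or_lt with rfl | hba
    · exact ⟨_, left_mem_uIcc, by simp⟩
    obtain ⟨y, hy, h⟩ := this (uIcc_comm a b ▸ hg) hba
    exact ⟨y, uIcc_comm a b ▸ hy, by linear_combination -h⟩
  obtain ⟨y, hy, hslope⟩ := exists_deriv_eq_slope g hab
    (fun x hx => (hg x (Icc_subset_uIcc hx)).continuousAt.continuousWithinAt)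
    (fun x hx => (hg x (Icc_subset_uIcc (Ioo_subset_Icc_self hx))).differentiableWithinAt)
  refine ⟨y, Icc_subset_uIcc (Ioo_subset_Icc_self hy), ?_⟩
  rw [hslope, div_mul_cancel₀ _ (sub_pos.2 hab).ne']

theorem sum_rpow_le_card_rpow_mul_rpow {ι : Type*} (s : Finset ι) {t : ι → ℝ}
    (ht : ∀ i ∈ s, 0 ≤ t i) {α : ℝ} (hα0 : 0 < α) (hα1 : α < 1) :
    ∑ i ∈ s, t i ^ α ≤ (#s : ℝ) ^ (1 - α) * (∑ i ∈ s, t i) ^ α := by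
  have := inner_le_Lp_mul_Lq_of_nonneg s (f := fun i => t i ^ α) (g := fun _ => 1)
    (HolderConjugate.inv_one_sub_inv hα0 hα1) (fun i hi => rpow_nonneg (ht i hi) _)
    (fun _ _ => zero_le_one)
  simp only [mul_one, one_rpow, sum_const, nsmul_eq_mul, one_div, inv_inv] at this
  convert this using 1
  rw [mul_comm]
  congr 1
  refine congr_arg (· ^ α) (sum_congr rfl fun i hi => ?_)
  rw [← rpow_mul (ht i hi), mul_inv_cancel₀ hα0.ne', rpow_one]

theorem sum_abs_sub_eq_abs_sub {x : ℕ → ℝ} (hx : Monotone x ∨ Antitone x) (n : ℕ) :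
    ∑ k ∈ range n, |x (k + 1) - x k| = |x n - x 0| := by
  rcases hx with hx | hx
  · rw [sum_congr rfl fun k _ => abs_of_nonneg (sub_nonneg.2 (hx k.le_succ)), sum_range_sub,
      abs_of_nonneg (sub_nonneg.2 (hx n.zero_le))]
  · rw [sum_congr rfl fun k _ => abs_of_nonpos (sub_nonpos.2 (hx k.le_succ)), sum_congr rfl
      fun k _ => neg_sub _ _, sum_range_sub', abs_of_nonpos (sub_nonpos.2 (hx n.zero_le)), neg_sub]

theorem log_sub_log_le_abs_sub_div {p q m : ℝ} (hp : 0 < p) (hm : 0 < m) (hq : m ≤ q) :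
    log p - log q ≤ |p - q| / m := by
  have hq0 : 0 < q := hm.trans_le hq
  calc log p - log q = log (p / q) := (log_div hp.ne' hq0.ne').symm
    _ ≤ p / q - 1 := log_le_sub_one_of_pos (by positivity)
    _ = (p - q) / q := by field_simp
    _ ≤ |p - q| / m := div_le_div₀ (abs_nonneg _) (le_abs_self _) hm hq

theorem continuousOn_deriv_of_contDiffOn {f : ℝ → ℝ} {s : Set ℝ} (hf : ContDiffOn ℝ 1 f s)
    (hs : UniqueDiffOn ℝ s) (hdiff : ∀ x ∈ s, DifferentiableAt ℝ f x) :
    ContinuousOn (deriv f) s :=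
  (hf.continuousOn_derivWithin hs le_rfl).congr fun x hx =>
    ((hdiff x hx).derivWithin (hs x hx)).symm

section Iterates

variable {f : ℝ → ℝ} {s : Set ℝ}

theorem hasDerivAt_iterate_prod (hmaps : MapsTo f s s) (hdiff : ∀ x ∈ s, DifferentiableAt ℝ f x)
    (n : ℕ) {x : ℝ} (hx : x ∈ s) : HasDerivAt f^[n] (∏ k ∈ range n, deriv f (f^[k] x)) x := by
  induction n generalizing x with
  | zero => simpa using hasDerivAt_id x
  | succ n ih =>
    rw [prod_range_succ', iterate_succ]
    simp only [iterate_succ_apply, iterate_zero_apply]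
    exact (ih (hmaps hx)).comp x (hdiff x hx).hasDerivAt

theorem log_deriv_iterate (hmaps : MapsTo f s s) (hder : ∀ x ∈ s, 0 < deriv f x) (n : ℕ) {x : ℝ}
    (hx : x ∈ s) : log (deriv f^[n] x) = birkhoffSum f (fun y => log (deriv f y)) n x := by
  rw [(hasDerivAt_iterate_prod hmaps (fun y hy => differentiableAt_of_deriv_ne_zero
    (hder y hy).ne') n hx).deriv, log_prod fun k _ => (hder _ (hmaps.iterate k hx)).ne']
  rfl

theorem monotoneOn_iterate (hf : MonotoneOn f s) (hmaps : MapsTo f s s) (n : ℕ) :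
    MonotoneOn f^[n] s := by
  induction n with
  | zero => exact monotoneOn_id
  | succ n ih =>
    rw [iterate_succ']
    exact hf.comp ih (hmaps.iterate n)

theorem monotone_or_antitone_iterate (hf : MonotoneOn f s) (hmaps : MapsTo f s s) {x : ℝ}
    (hx : x ∈ s) : Monotone (fun n => f^[n] x) ∨ Antitone (fun n => f^[n] x) := by
  have hmem : ∀ k, f^[k] x ∈ s := fun k => hmaps.iterate k hx
  rcases le_total x (f x) with h | h
  · refine .inl (monotone_nat_of_le_succ fun k => ?_)
    induction k with
    | zero => simpa
    | succ k ih =>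
      rw [iterate_succ_apply' f k, iterate_succ_apply' f (k + 1)]
      exact hf (hmem k) (hmem (k + 1)) ih
  · refine .inr (antitone_nat_of_succ_le fun k => ?_)
    induction k with
    | zero => simpa
    | succ k ih =>
      rw [iterate_succ_apply' f k, iterate_succ_apply' f (k + 1)]
      exact hf (hmem (k + 1)) (hmem k) ih

end Iterates

section UnitInterval

variable {f : ℝ → ℝ} {α C : ℝ}

theorem continuousOn_log_deriv (hC1 : ContDiffOn ℝ 1 f (Icc 0 1))
    (hder : ∀ x ∈ Icc (0 : ℝ) 1, 0 < deriv f x) :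
    ContinuousOn (fun x => log (deriv f x)) (Icc 0 1) :=
  (continuousOn_deriv_of_contDiffOn hC1 uniqueDiffOn_Icc_zero_one
    fun x hx => differentiableAt_of_deriv_ne_zero (hder x hx).ne').log fun x hx => (hder x hx).ne'

theorem exists_log_deriv_sub_le (hC1 : ContDiffOn ℝ 1 f (Icc 0 1))
    (hder : ∀ x ∈ Icc (0 : ℝ) 1, 0 < deriv f x) {Chol : ℝ}
    (hhol : ∀ x ∈ Icc (0 : ℝ) 1, ∀ y ∈ Icc (0 : ℝ) 1,
      |deriv f x - deriv f y| ≤ Chol * |x - y| ^ α) :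
    ∃ C ≥ 0, ∀ x ∈ Icc (0 : ℝ) 1, ∀ y ∈ Icc (0 : ℝ) 1,
      log (deriv f x) - log (deriv f y) ≤ C * |x - y| ^ α := by
  obtain ⟨z, hz, hmin⟩ := isCompact_Icc.exists_isMinOn (nonempty_Icc.2 zero_le_one)
    (continuousOn_deriv_of_contDiffOn hC1 uniqueDiffOn_Icc_zero_one
      fun x hx => differentiableAt_of_deriv_ne_zero (hder x hx).ne')
  have hChol : 0 ≤ Chol := (abs_nonneg _).trans <| by
    simpa using hhol 0 (left_mem_Icc.2 zero_le_one) 1 (right_mem_Icc.2 zero_le_one)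
  refine ⟨Chol / deriv f z, div_nonneg hChol (hder z hz).le, fun x hx y hy => ?_⟩
  calc log (deriv f x) - log (deriv f y) ≤ |deriv f x - deriv f y| / deriv f z :=
        log_sub_log_le_abs_sub_div (hder x hx) (hder z hz) (hmin hy)
    _ ≤ Chol * |x - y| ^ α / deriv f z := div_le_div_of_nonneg_right (hhol x hx y hy) (hder z hz).le
    _ = Chol / deriv f z * |x - y| ^ α := by ring

/-- The images of the interval between `u` and `f u` under `f^[k]` are consecutive, so their
lengths add up to at most `1`. -/
theorem log_deriv_iterate_sub_le (hα0 : 0 < α) (hα1 : α < 1)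
    (hmaps : MapsTo f (Icc 0 1) (Icc 0 1)) (hmono : MonotoneOn f (Icc 0 1))
    (hder : ∀ x ∈ Icc (0 : ℝ) 1, 0 < deriv f x) (hC : 0 ≤ C)
    (hφ : ∀ x ∈ Icc (0 : ℝ) 1, ∀ y ∈ Icc (0 : ℝ) 1,
      log (deriv f x) - log (deriv f y) ≤ C * |x - y| ^ α)
    (n : ℕ) {u y : ℝ} (hu : u ∈ Icc (0 : ℝ) 1) (hy : y ∈ uIcc u (f u)) :
    log (deriv f^[n] (f u)) - log (deriv f^[n] y) ≤ C * (n : ℝ) ^ (1 - α) := by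
  have hJ : uIcc u (f u) ⊆ Icc 0 1 := uIcc_subset_Icc hu (hmaps hu)
  have hstep : ∀ k, |f^[k] (f u) - f^[k] y| ≤ |f^[k + 1] u - f^[k] u| := fun k => by
    rw [iterate_succ_apply]
    exact abs_sub_right_of_mem_uIcc (((monotoneOn_iterate hmono hmaps k).mono hJ).mapsTo_uIcc hy)
  have horbit : ∑ k ∈ range n, |f^[k + 1] u - f^[k] u| ≤ 1 := by
    rw [sum_abs_sub_eq_abs_sub (monotone_or_antitone_iterate hmono hmaps hu), ← Real.dist_eq]
    exact dist_le_of_mem_Icc_01 (hmaps.iterate n hu) hu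
  rw [log_deriv_iterate hmaps hder n (hmaps hu), log_deriv_iterate hmaps hder n (hJ hy),
    birkhoffSum, birkhoffSum, ← sum_sub_distrib]
  calc ∑ k ∈ range n, (log (deriv f (f^[k] (f u))) - log (deriv f (f^[k] y)))
      ≤ ∑ k ∈ range n, C * |f^[k + 1] u - f^[k] u| ^ α := sum_le_sum fun k _ =>
        (hφ _ (hmaps.iterate k (hmaps hu)) _ (hmaps.iterate k (hJ hy))).trans
          (mul_le_mul_of_nonneg_left (rpow_le_rpow (abs_nonneg _) (hstep k) hα0.le) hC)
    _ ≤ C * ((n : ℝ) ^ (1 - α) * (∑ k ∈ range n, |f^[k + 1] u - f^[k] u|) ^ α) := by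
        rw [← mul_sum]
        gcongr
        simpa using sum_rpow_le_card_rpow_mul_rpow (range n) (fun k _ => abs_nonneg _) hα0 hα1
    _ ≤ C * (n : ℝ) ^ (1 - α) := by
        gcongr
        exact mul_le_of_le_one_right (by positivity)
          (rpow_le_one (sum_nonneg fun k _ => abs_nonneg _) horbit hα0.le)

theorem abs_sub_le_exp_sub_log_deriv_iterate (hα0 : 0 < α) (hα1 : α < 1)
    (hmaps : MapsTo f (Icc 0 1) (Icc 0 1)) (hmono : MonotoneOn f (Icc 0 1))
    (hder : ∀ x ∈ Icc (0 : ℝ) 1, 0 < deriv f x) (hC : 0 ≤ C)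
    (hφ : ∀ x ∈ Icc (0 : ℝ) 1, ∀ y ∈ Icc (0 : ℝ) 1,
      log (deriv f x) - log (deriv f y) ≤ C * |x - y| ^ α)
    (n : ℕ) {u : ℝ} (hu : u ∈ Icc (0 : ℝ) 1) :
    |f u - u| ≤ exp (C * (n : ℝ) ^ (1 - α) - log (deriv f^[n] (f u))) := by
  have hJ : uIcc u (f u) ⊆ Icc 0 1 := uIcc_subset_Icc hu (hmaps hu)
  have hderiv := fun x (hx : x ∈ Icc (0 : ℝ) 1) => hasDerivAt_iterate_prod hmaps
    (fun x hx => differentiableAt_of_deriv_ne_zero (hder x hx).ne') n hx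
  obtain ⟨y, hy, hmvt⟩ :=
    exists_mem_uIcc_sub_eq_deriv_mul fun z hz => (hderiv _ (hJ hz)).differentiableAt
  have hpos : 0 < deriv f^[n] y := by
    rw [(hderiv _ (hJ hy)).deriv]
    exact prod_pos fun k _ => hder _ (hmaps.iterate k (hJ hy))
  calc |f u - u| = |f^[n] (f u) - f^[n] u| / deriv f^[n] y := by
        rw [hmvt, abs_mul, abs_of_pos hpos, mul_div_cancel_left₀ _ hpos.ne']
    _ ≤ 1 / deriv f^[n] y := by
        gcongr
        rw [← Real.dist_eq]
        exact dist_le_of_mem_Icc_01 (hmaps.iterate n (hmaps hu)) (hmaps.iterate n hu)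
    _ = exp (-log (deriv f^[n] y)) := by rw [exp_neg, exp_log hpos, one_div]
    _ ≤ exp (C * (n : ℝ) ^ (1 - α) - log (deriv f^[n] (f u))) := by
        gcongr
        linarith [log_deriv_iterate_sub_le hα0 hα1 hmaps hmono hder hC hφ n hu hy]

theorem two_mul_sub_sub_le_exp (hα0 : 0 < α) (hα1 : α < 1)
    (hmaps : MapsTo f (Icc 0 1) (Icc 0 1)) (hC1 : ContDiffOn ℝ 1 f (Icc 0 1))
    (hmono : MonotoneOn f (Icc 0 1)) (hder : ∀ x ∈ Icc (0 : ℝ) 1, 0 < deriv f x) (h0 : f 0 = 0)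
    (h1 : f 1 = 1) (hC : 0 ≤ C)
    (hφ : ∀ x ∈ Icc (0 : ℝ) 1, ∀ y ∈ Icc (0 : ℝ) 1,
      log (deriv f x) - log (deriv f y) ≤ C * |x - y| ^ α)
    {a : ℕ → ℝ} (ha : ∀ n, IsGreatest ((fun x => log (deriv f^[n] x)) '' Icc 0 1) (a n))
    {n : ℕ} (hn : 1 ≤ n) :
    2 * a n - a (n - 1) - a (n + 1) ≤ C * exp (α * (C * (n : ℝ) ^ (1 - α) - a n)) := by
  obtain ⟨v, hv, hva⟩ := (ha n).1
  obtain ⟨u, hu, rfl⟩ := intermediate_value_Icc zero_le_one hC1.continuousOn (by rwa [h0, h1])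
  simp only [log_deriv_iterate hmaps hder _ (hmaps hu)] at hva
  have hsucc : a n + log (deriv f u) ≤ a (n + 1) := by
    have : log (deriv f^[n + 1] u) ≤ a (n + 1) := (ha (n + 1)).2 ⟨u, hu, rfl⟩
    rw [log_deriv_iterate hmaps hder _ hu, birkhoffSum_succ', hva] at this
    linarith
  have hpred : a n - log (deriv f (f u)) ≤ a (n - 1) := by
    have : log (deriv f^[n - 1] (f (f u))) ≤ a (n - 1) :=
      (ha (n - 1)).2 ⟨f (f u), hmaps (hmaps hu), rfl⟩
    obtain ⟨m, rfl⟩ : ∃ m, n = m + 1 := ⟨n - 1, by omega⟩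
    rw [log_deriv_iterate hmaps hder _ (hmaps (hmaps hu))] at this
    rw [birkhoffSum_succ'] at hva
    simp only [Nat.add_sub_cancel] at this ⊢
    linarith
  have hdom := abs_sub_le_exp_sub_log_deriv_iterate hα0 hα1 hmaps hmono hder hC hφ n hu
  rw [log_deriv_iterate hmaps hder _ (hmaps hu), hva] at hdom
  calc 2 * a n - a (n - 1) - a (n + 1) ≤ log (deriv f (f u)) - log (deriv f u) := by linarith
    _ ≤ C * |f u - u| ^ α := hφ _ (hmaps hu) _ hu
    _ ≤ C * exp (C * (n : ℝ) ^ (1 - α) - a n) ^ α := by gcongr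
    _ = C * exp (α * (C * (n : ℝ) ^ (1 - α) - a n)) := by rw [← exp_mul, mul_comm α]

/-- Since every fixed point is parabolic, the points where `log f'` is at least `ε` move by a
definite amount under `f`. -/
theorem exists_log_deriv_le_add_mul_abs_sub (hC1 : ContDiffOn ℝ 1 f (Icc 0 1))
    (hder : ∀ x ∈ Icc (0 : ℝ) 1, 0 < deriv f x)
    (hfix : ∀ x ∈ Icc (0 : ℝ) 1, f x = x → deriv f x = 1) {ε : ℝ} (hε : 0 < ε) :
    ∃ K ≥ 0, ∀ y ∈ Icc (0 : ℝ) 1, log (deriv f y) ≤ ε + K * |f y - y| := by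
  have hcont := continuousOn_log_deriv hC1 hder
  set S := Icc (0 : ℝ) 1 ∩ (fun y => log (deriv f y)) ⁻¹' Ici ε
  have hS : IsCompact S := isCompact_Icc.of_isClosed_subset
    (hcont.preimage_isClosed_of_isClosed isClosed_Icc isClosed_Ici) Set.inter_subset_left
  obtain ⟨A, hA⟩ := isCompact_Icc.exists_bound_of_continuousOn hcont
  have hA0 : 0 ≤ A := (norm_nonneg _).trans (hA 0 (left_mem_Icc.2 zero_le_one))
  rcases S.eq_empty_or_nonempty with hSe | hSne
  · refine ⟨0, le_rfl, fun y hy => ?_⟩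
    by_contra! h
    exact hSe.subset ⟨hy, by simpa using h.le⟩
  obtain ⟨z, hz, hmin⟩ := hS.exists_isMinOn hSne
    ((hC1.continuousOn.sub continuousOn_id).abs.mono Set.inter_subset_left)
  have hρ : 0 < |f z - z| := abs_pos.2 <| sub_ne_zero.2 fun hfz => by
    have := hz.2
    simp only [Set.mem_preimage, Set.mem_Ici, hfix z hz.1 hfz, log_one] at this
    linarith
  refine ⟨A / |f z - z|, by positivity, fun y hy => ?_⟩
  by_cases hyS : ε ≤ log (deriv f y)
  · calc log (deriv f y) ≤ A := (le_abs_self _).trans (hA y hy)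
      _ = A / |f z - z| * |f z - z| := (div_mul_cancel₀ _ hρ.ne').symm
      _ ≤ A / |f z - z| * |f y - y| :=
          mul_le_mul_of_nonneg_left (hmin ⟨hy, hyS⟩) (by positivity)
      _ ≤ ε + A / |f z - z| * |f y - y| := by linarith
  · have : 0 ≤ A / |f z - z| * |f y - y| := by positivity
    linarith

theorem birkhoffSum_log_deriv_le (hmaps : MapsTo f (Icc 0 1) (Icc 0 1))
    (hC1 : ContDiffOn ℝ 1 f (Icc 0 1)) (hmono : MonotoneOn f (Icc 0 1))
    (hder : ∀ x ∈ Icc (0 : ℝ) 1, 0 < deriv f x)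
    (hfix : ∀ x ∈ Icc (0 : ℝ) 1, f x = x → deriv f x = 1) {ε : ℝ} (hε : 0 < ε) :
    ∃ K, ∀ n, ∀ x ∈ Icc (0 : ℝ) 1, birkhoffSum f (fun y => log (deriv f y)) n x ≤ ε * n + K := by
  obtain ⟨K, hK0, hK⟩ := exists_log_deriv_le_add_mul_abs_sub hC1 hder hfix hε
  refine ⟨K, fun n x hx => ?_⟩
  calc birkhoffSum f (fun y => log (deriv f y)) n x
      ≤ ∑ k ∈ range n, (ε + K * |f^[k + 1] x - f^[k] x|) := sum_le_sum fun k _ => by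
        rw [iterate_succ_apply']
        exact hK _ (hmaps.iterate k hx)
    _ = ε * n + K * |f^[n] x - x| := by
        rw [sum_add_distrib, ← mul_sum, sum_abs_sub_eq_abs_sub
          (monotone_or_antitone_iterate hmono hmaps hx)]
        simp [mul_comm]
    _ ≤ ε * n + K := by
        rw [← Real.dist_eq]
        gcongr
        exact mul_le_of_le_one_right hK0 (dist_le_of_mem_Icc_01 (hmaps.iterate n hx) hx)

theorem exists_le_mul_add_of_isGreatest (hmaps : MapsTo f (Icc 0 1) (Icc 0 1))
    (hC1 : ContDiffOn ℝ 1 f (Icc 0 1)) (hmono : MonotoneOn f (Icc 0 1))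
    (hder : ∀ x ∈ Icc (0 : ℝ) 1, 0 < deriv f x)
    (hfix : ∀ x ∈ Icc (0 : ℝ) 1, f x = x → deriv f x = 1)
    {a : ℕ → ℝ} (ha : ∀ n, IsGreatest ((fun x => log (deriv f^[n] x)) '' Icc 0 1) (a n))
    {ε : ℝ} (hε : 0 < ε) : ∃ K, ∀ n, a n ≤ ε * n + K := by
  obtain ⟨K, hK⟩ := birkhoffSum_log_deriv_le hmaps hC1 hmono hder hfix hε
  refine ⟨K, fun n => ?_⟩
  obtain ⟨x, hx, hxa⟩ := (ha n).1
  rw [← show log (deriv f^[n] x) = a n from hxa, log_deriv_iterate hmaps hder n hx]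
  exact hK n x hx

end UnitInterval

theorem stmt_18_general (α : ℝ) (hα : α ∈ Set.Ioo (0:ℝ) 1)
    (f : ℝ → ℝ)
    (hmaps : Set.MapsTo f (Set.Icc 0 1) (Set.Icc 0 1))
    (hC1 : ContDiffOn ℝ 1 f (Set.Icc 0 1))
    (hder : ∀ x ∈ Set.Icc (0:ℝ) 1, 0 < deriv f x)
    (h0 : f 0 = 0) (h1 : f 1 = 1)
    (Chol : ℝ)
    (hhol : ∀ x ∈ Set.Icc (0:ℝ) 1, ∀ y ∈ Set.Icc (0:ℝ) 1,
      |deriv f x - deriv f y| ≤ Chol * |x - y| ^ α)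
    (hfix : ∀ x ∈ Set.Icc (0:ℝ) 1, f x = x → deriv f x = 1)
    (a : ℕ → ℝ)
    (ha : ∀ n, IsGreatest ((fun x => Real.log (deriv (f^[n]) x)) '' Set.Icc 0 1) (a n)) :
    ∃ K > 0, ∃ K₁ > 0, ∀ n ≥ 1,
      2 * a n - a (n - 1) - a (n + 1) ≤
        K * Real.exp (-a n + K₁ * (n : ℝ) ^ (1 - α)) := by
  obtain ⟨hα0, hα1⟩ := hα
  have hmono : MonotoneOn f (Icc 0 1) := (strictMonoOn_of_deriv_pos (convex_Icc 0 1)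
    hC1.continuousOn fun x hx => hder x (interior_subset hx)).monotoneOn
  obtain ⟨C, hC, hφ⟩ := exists_log_deriv_sub_le hC1 hder hhol
  have hconv : ∀ k ≥ 1, 2 * a k - a (k - 1) - a (k + 1) ≤
      C * exp (α * (C * (k : ℝ) ^ (1 - α) - a k)) :=
    fun k hk => two_mul_sub_sub_le_exp hα0 hα1 hmaps hC1 hmono hder h0 h1 hC hφ ha hk
  obtain ⟨D, hD, C₀, hgrowth⟩ := exists_le_mul_rpow_add_of_almostConvex hα0 (sub_pos.2 hα1)
    (by linarith) hC hconv
    fun ε hε => exists_le_mul_add_of_isGreatest hmaps hC1 hmono hder hfix ha hε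
  refine ⟨(C + 1) * exp ((1 - α) * C₀), by positivity, (1 - α) * D + α * C,
    add_pos_of_pos_of_nonneg (mul_pos (sub_pos.2 hα1) hD) (mul_nonneg hα0.le hC), fun n hn => ?_⟩
  have hgap := mul_le_mul_of_nonneg_left (hgrowth n) (sub_pos.2 hα1).le
  calc 2 * a n - a (n - 1) - a (n + 1)
      ≤ C * exp (α * (C * (n : ℝ) ^ (1 - α) - a n)) := hconv n hn
    _ ≤ (C + 1) * exp ((1 - α) * C₀ + (-a n + ((1 - α) * D + α * C) * (n : ℝ) ^ (1 - α))) := by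
        gcongr
        · linarith
        · nlinarith
    _ = (C + 1) * exp ((1 - α) * C₀) *
          exp (-a n + ((1 - α) * D + α * C) * (n : ℝ) ^ (1 - α)) := by
        rw [exp_add, mul_assoc]

theorem stmt_18 (α : ℝ) (hα : α ∈ Set.Ioo (0:ℝ) 1)
    (f : ℝ → ℝ)
    (hmaps : Set.MapsTo f (Set.Icc 0 1) (Set.Icc 0 1))
    (hC1 : ContDiffOn ℝ 1 f (Set.Icc 0 1))
    (hder : ∀ x ∈ Set.Icc (0:ℝ) 1, 0 < deriv f x)
    (h0 : f 0 = 0) (h1 : f 1 = 1)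
    (Chol : ℝ)
    (hhol : ∀ x ∈ Set.Icc (0:ℝ) 1, ∀ y ∈ Set.Icc (0:ℝ) 1,
      |deriv f x - deriv f y| ≤ Chol * |x - y| ^ α)
    (hfix : ∀ x ∈ Set.Icc (0:ℝ) 1, f x = x → deriv f x = 1)
    (a : ℕ → ℝ) (ha0 : a 0 = 0)
    (ha : ∀ n, IsGreatest ((fun x => Real.log (deriv (f^[n]) x)) '' Set.Icc 0 1) (a n)) :
    ∃ K > 0, ∃ K₁ > 0, ∀ n ≥ 1,
      2 * a n - a (n - 1) - a (n + 1) ≤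
        K * Real.exp (-a n + K₁ * (n : ℝ) ^ (1 - α)) :=
  stmt_18_general α hα f hmaps hC1 hder h0 h1 Chol hhol hfix a ha
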